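/- For all integers n, m ≥ 1, every integer k with 0 ≤ k ≤ n+m−1, and every real number a, the linearization coefficients with a₁ = a and a₂ = 1−a satisfy the Berg–Vignat recurrence (1/(2k+1)) · β_{k+1}^{(n,m)}(a, 1−a) = (a²/(2n−1)) · β_k^{(n−1,m)}(a, 1−a) + ((1−a)²/(2m−1)) · β_k^{(n,m−1)}(a, 1−a). -/

import Mathlib

open Finset

/-- The Bessel polynomial `q_n(u) = ∑_{k=0}^n (n!(2n−k)! 2^k)/((2n)!(n−k)! k!) u^k`. -/
noncomputable def besselQ (n : ℕ) (u : ℝ) : ℝ :=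
  ∑ k ∈ Finset.range (n + 1),
    ((n.factorial : ℝ) * (2 * n - k).factorial * 2 ^ k) /
      ((2 * n).factorial * (n - k).factorial * k.factorial) * u ^ k

/-! The operator `1 - d/du` lowers Bessel polynomials: comparing coefficients gives
`q_{n+1} - q_{n+1}' = u q_n / (2n+1)`. For `f(u) = q_n(au) q_m(bu)` with `a + b = 1`, Leibniz' rule
splits `f - f'` as `a (q_n - q_n')(au) q_m(bu) + b q_n(au) (q_m - q_m')(bu)`, hence
`f - f' = u (a²/(2n-1) q_{n-1}(au) q_m(bu) + b²/(2m-1) q_n(au) q_{m-1}(bu))`.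
Applied instead to the expansion `f = ∑ β_k q_k`, the same operator gives
`β_0 + u ∑ β_{k+1} q_k / (2k+1)`; the recurrence follows by comparing coordinates in the basis
`(q_k)`, whose members have distinct degrees. -/

open Polynomial

/-- `n.descFactorial k / (2n).descFactorial k = (-n)_k / (-2n)_k`; unlike the factorial formula,
this vanishes for `k > n`. -/
noncomputable def besselCoeff (n k : ℕ) : ℝ :=
  2 ^ k * n.descFactorial k / ((2 * n).descFactorial k * k.factorial)

lemma besselCoeff_eq_zero_of_lt {n k : ℕ} (h : n < k) : besselCoeff n k = 0 := by
  simp [besselCoeff, Nat.descFactorial_eq_zero_iff_lt.mpr h]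

lemma besselCoeff_self_ne_zero (n : ℕ) : besselCoeff n n ≠ 0 := by
  have : (2 * n).descFactorial n ≠ 0 := by
    rw [Ne, Nat.descFactorial_eq_zero_iff_lt]; omega
  simp [besselCoeff, Nat.descFactorial_self, Nat.factorial_ne_zero, this]

lemma besselCoeff_eq_factorial {n k : ℕ} (h : k ≤ n) :
    besselCoeff n k = (n.factorial : ℝ) * (2 * n - k).factorial * 2 ^ k /
      ((2 * n).factorial * (n - k).factorial * k.factorial) := by
  rw [besselCoeff, ← Nat.factorial_mul_descFactorial h,
    ← Nat.factorial_mul_descFactorial (show k ≤ 2 * n by omega)]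
  have := Nat.factorial_ne_zero (n - k)
  have := Nat.factorial_ne_zero (2 * n - k)
  push_cast
  field_simp

lemma besselCoeff_succ_right (n k : ℕ) :
    ((2 * n - k : ℕ) : ℝ) * (k + 1) * besselCoeff n (k + 1) =
      2 * ((n - k : ℕ) : ℝ) * besselCoeff n k := by
  rcases lt_or_ge k (2 * n) with hk | hk
  · have hD : (2 * n).descFactorial k ≠ 0 := by
      rw [Ne, Nat.descFactorial_eq_zero_iff_lt]; omega
    have hk' : ((2 * n - k : ℕ) : ℝ) ≠ 0 := by norm_cast; omega
    simp only [besselCoeff, Nat.descFactorial_succ, Nat.factorial_succ]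
    push_cast
    field_simp
    ring
  · simp [Nat.sub_eq_zero_of_le hk, Nat.sub_eq_zero_of_le (show n ≤ k by omega)]

lemma besselCoeff_succ_succ (n k : ℕ) :
    (2 * n + 1) * (k + 1) * besselCoeff (n + 1) (k + 1) =
      ((2 * n + 1 - k : ℕ) : ℝ) * besselCoeff n k := by
  rcases le_or_gt k n with hk | hk
  · have hshift := Nat.succ_descFactorial (2 * n) k
    have hD₁ : (2 * n + 1).descFactorial k ≠ 0 := by
      rw [Ne, Nat.descFactorial_eq_zero_iff_lt]; omega
    have hD : (2 * n).descFactorial k ≠ 0 := by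
      rw [Ne, Nat.descFactorial_eq_zero_iff_lt]; omega
    simp only [besselCoeff, show 2 * (n + 1) = 2 * n + 1 + 1 by ring,
      Nat.succ_descFactorial_succ, Nat.factorial_succ]
    rw [← Nat.cast_inj (R := ℝ)] at hshift
    push_cast at hshift ⊢
    field_simp
    linear_combination (-2 * ((n : ℝ) + 1) * 2 ^ k * (n.descFactorial k : ℝ)) * hshift
  · simp [besselCoeff_eq_zero_of_lt hk, besselCoeff_eq_zero_of_lt (show n + 1 < k + 1 by omega)]

noncomputable def besselPoly (n : ℕ) : ℝ[X] :=
  ∑ k ∈ Finset.range (n + 1), C (besselCoeff n k) * X ^ k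

lemma coeff_besselPoly (n k : ℕ) : (besselPoly n).coeff k = besselCoeff n k := by
  simp only [besselPoly, finsetSum_coeff, coeff_C_mul_X_pow, Finset.sum_ite_eq, Finset.mem_range]
  split_ifs with h
  · rfl
  · exact (besselCoeff_eq_zero_of_lt (by omega)).symm

lemma eval_besselPoly (n : ℕ) (u : ℝ) : (besselPoly n).eval u = besselQ n u := by
  simp only [besselPoly, besselQ, eval_finsetSum, eval_C_mul, eval_X_pow]
  refine Finset.sum_congr rfl fun k hk => ?_
  rw [besselCoeff_eq_factorial (by simpa [Nat.lt_succ_iff] using hk)]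

lemma degree_besselPoly (n : ℕ) : (besselPoly n).degree = n := by
  refine degree_eq_of_le_of_coeff_ne_zero ((degree_le_iff_coeff_zero _ _).mpr fun k hk => ?_) ?_
  · rw [coeff_besselPoly, besselCoeff_eq_zero_of_lt (by exact_mod_cast hk)]
  · rw [coeff_besselPoly]
    exact besselCoeff_self_ne_zero n

noncomputable def besselSeq : Polynomial.Sequence ℝ := ⟨besselPoly, degree_besselPoly⟩

lemma besselPoly_succ_sub_derivative (n : ℕ) :
    besselPoly (n + 1) - derivative (besselPoly (n + 1)) =
      C (1 / (2 * n + 1 : ℝ)) * X * besselPoly n := by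
  ext (_ | i)
  · have hratio := besselCoeff_succ_right (n + 1) 0
    simp only [coeff_sub, coeff_derivative, coeff_besselPoly, mul_assoc, coeff_C_mul,
      coeff_X_mul_zero, mul_zero, zero_add, Nat.cast_zero, Nat.sub_zero, mul_one] at hratio ⊢
    push_cast at hratio
    have h₁ : besselCoeff (n + 1) 1 = besselCoeff (n + 1) 0 :=
      mul_left_cancel₀ (by positivity : 2 * ((n : ℝ) + 1) ≠ 0) (by linear_combination hratio)
    rw [h₁, sub_self]
  · simp only [coeff_sub, coeff_derivative, coeff_besselPoly, mul_assoc, coeff_C_mul,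
      coeff_X_mul]
    rcases le_or_gt i n with hi | hi
    · have hratio := besselCoeff_succ_right (n + 1) (i + 1)
      have hshift := besselCoeff_succ_succ n i
      rw [show 2 * (n + 1) - (i + 1) = 2 * n + 1 - i by omega,
        show n + 1 - (i + 1) = n - i by omega] at hratio
      have hne : ((2 * n + 1 - i : ℕ) : ℝ) ≠ 0 := by norm_cast; omega
      push_cast [hi, show i ≤ 2 * n + 1 by omega] at hratio hshift hne
      push_cast
      rw [one_div_mul_eq_div, eq_div_iff (by positivity)]
      apply mul_left_cancel₀ hne
      linear_combination (-(2 * (n : ℝ) + 1)) * hratio + hshift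
    · simp [besselCoeff_eq_zero_of_lt hi, besselCoeff_eq_zero_of_lt (show n + 1 < i + 1 by omega),
        besselCoeff_eq_zero_of_lt (show n + 1 < i + 1 + 1 by omega)]

lemma besselPoly_zero : besselPoly 0 = 1 := by
  simp [besselPoly, besselCoeff]

lemma sum_besselPoly_sub_derivative (N : ℕ) (c : ℕ → ℝ) :
    (∑ k ∈ Finset.range (N + 1), C (c k) * besselPoly k) -
        derivative (∑ k ∈ Finset.range (N + 1), C (c k) * besselPoly k) =
      C (c 0) + X * ∑ j ∈ Finset.range N, C (c (j + 1) / (2 * j + 1)) * besselPoly j := by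
  rw [derivative_sum, ← Finset.sum_sub_distrib, Finset.sum_range_succ', add_comm, Finset.mul_sum]
  simp only [derivative_C_mul, ← mul_sub, besselPoly_succ_sub_derivative, besselPoly_zero,
    mul_one, derivative_C, sub_zero, div_eq_mul_one_div (c _), C_mul]
  exact congrArg _ (Finset.sum_congr rfl fun j _ => by ring)

lemma Polynomial.Sequence.eq_of_sum_C_mul_eq {R : Type*} [CommRing R] [IsDomain R]
    (S : Polynomial.Sequence R) {s : Finset ℕ} {d e : ℕ → R}
    (h : ∑ j ∈ s, C (d j) * S j = ∑ j ∈ s, C (e j) * S j) : ∀ j ∈ s, d j = e j := by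
  have hzero : ∑ j ∈ s, (d j - e j) • S j = 0 := by
    simp only [sub_smul, Finset.sum_sub_distrib, smul_eq_C_mul, h, sub_self]
  exact fun j hj => sub_eq_zero.mp (linearIndependent_iff'.mp S.linearIndependent s _ hzero j hj)

lemma coeff_eq_of_sum_besselPoly_sub_derivative {N : ℕ} {c e : ℕ → ℝ}
    (h : (∑ k ∈ Finset.range (N + 1), C (c k) * besselPoly k) -
        derivative (∑ k ∈ Finset.range (N + 1), C (c k) * besselPoly k) =
      X * ∑ j ∈ Finset.range N, C (e j) * besselPoly j) :
    ∀ j < N, c (j + 1) / (2 * j + 1) = e j := by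
  rw [sum_besselPoly_sub_derivative] at h
  have hc : c 0 = 0 := by simpa using congrArg (coeff · 0) h
  rw [hc, C_0, zero_add] at h
  exact fun j hj => besselSeq.eq_of_sum_C_mul_eq (mul_left_cancel₀ X_ne_zero h) j
    (Finset.mem_range.mpr hj)

lemma comp_mul_comp_sub_derivative {R : Type*} [CommRing R] {P Q P₀ Q₀ : R[X]} {a b r s : R}
    (hab : a + b = 1) (hP : P - derivative P = C r * X * P₀)
    (hQ : Q - derivative Q = C s * X * Q₀) :
    P.comp (C a * X) * Q.comp (C b * X) - derivative (P.comp (C a * X) * Q.comp (C b * X)) =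
      X * (C (a ^ 2 * r) * (P₀.comp (C a * X) * Q.comp (C b * X)) +
        C (b ^ 2 * s) * (P.comp (C a * X) * Q₀.comp (C b * X))) := by
  have hPa := congrArg (·.comp (C a * X)) hP
  have hQb := congrArg (·.comp (C b * X)) hQ
  have hCab : C a + C b = 1 := by rw [← C_add, hab, C_1]
  simp only [sub_comp, mul_comp, C_comp, X_comp] at hPa hQb
  rw [derivative_mul, derivative_comp, derivative_comp]
  simp only [derivative_C_mul_X, map_mul, map_pow]
  linear_combination (C a * Q.comp (C b * X)) * hPa + (C b * P.comp (C a * X)) * hQb -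
    (P.comp (C a * X) * Q.comp (C b * X)) * hCab

/-- Berg–Vignat recurrence for the linearization coefficients with `a₁ = a`, `a₂ = 1−a`:
`(1/(2k+1)) β_{k+1}^{(n,m)}(a) = (a²/(2n−1)) β_k^{(n−1,m)}(a) + ((1−a)²/(2m−1)) β_k^{(n,m−1)}(a)`.
Here `β n m` is the family of linearization coefficients of `q_n(au) q_m((1−a)u)`. -/
theorem bergVignat_recurrence (a : ℝ) (β : ℕ → ℕ → ℕ → ℝ)
    (hβ : ∀ n m : ℕ, ∀ u : ℝ, besselQ n (a * u) * besselQ m ((1 - a) * u) =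
      ∑ k ∈ Finset.range (n + m + 1), β n m k * besselQ k u)
    (n m k : ℕ) (hn : 1 ≤ n) (hm : 1 ≤ m) (hk : k ≤ n + m - 1) :
    (1 / (2 * (k : ℝ) + 1)) * β n m (k + 1) =
      a ^ 2 / (2 * (n : ℝ) - 1) * β (n - 1) m k +
        (1 - a) ^ 2 / (2 * (m : ℝ) - 1) * β n (m - 1) k := by
  obtain ⟨p, rfl⟩ : ∃ p, n = p + 1 := ⟨n - 1, by omega⟩
  obtain ⟨q, rfl⟩ : ∃ q, m = q + 1 := ⟨m - 1, by omega⟩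
  have hlin : ∀ n m, (besselPoly n).comp (C a * X) * (besselPoly m).comp (C (1 - a) * X) =
      ∑ k ∈ Finset.range (n + m + 1), C (β n m k) * besselPoly k := fun n m =>
    Polynomial.funext fun u => by simpa [eval_finsetSum, eval_besselPoly] using hβ n m u
  have key := comp_mul_comp_sub_derivative (add_sub_cancel a 1)
    (besselPoly_succ_sub_derivative p) (besselPoly_succ_sub_derivative q)
  rw [hlin, hlin, hlin, show p + 1 + (q + 1) = p + q + 2 by ring, show p + (q + 1) = p + q + 1 by ring,
    show p + 1 + q = p + q + 1 by ring, Finset.mul_sum, Finset.mul_sum,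
    ← Finset.sum_add_distrib] at key
  simp only [← mul_assoc, ← C_mul, ← add_mul, ← C_add] at key
  have hcoeff := coeff_eq_of_sum_besselPoly_sub_derivative key k (by omega)
  simp only [Nat.add_sub_cancel, Nat.cast_add, Nat.cast_one]
  rw [show 2 * ((p : ℝ) + 1) - 1 = 2 * p + 1 by ring,
    show 2 * ((q : ℝ) + 1) - 1 = 2 * q + 1 by ring]
  linear_combination hcoeff
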